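/- Let ε ∈ (0,1) and define Φ_ε'(u) = (2−ε)u for |u| ≤ 1, Φ_ε'(u) = ((2−ε)/ε)(1+ε−u) for 1 ≤ u ≤ 1+ε, Φ_ε'(u) = ((ε−2)/ε)(1+ε+u) for −1−ε ≤ u ≤ −1, and Φ_ε'(u) = 0 for |u| ≥ 1+ε. Then u_ε(t,x) = (1−ε)cos(√(2−ε) t) and v_ε(t,x) = 1+ε both solve ∂²_tt w = ∂²_xx w − Φ_ε'(w) with Neumann boundary conditions on (0,L), with initial data (1−ε, 0) and (1+ε, 0) respectively. As ε → 0, u_ε → cos(√2 t) and v_ε → 1 pointwise, giving two distinct limit solutions with the same limiting initial data u₀ ≡ 1, u₁ ≡ 0. -/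

import Mathlib

/-!
For `0 < ε < 1` the amplitude of `(1 - ε) cos (√(2 - ε) t)` stays in `[-1, 1]`, where `Φ_ε'` is
the linear restoring force `(2 - ε) u`, so this spatially constant function is a harmonic
oscillation solving the equation; the constant `1 + ε` sits where `Φ_ε'` vanishes, hence is an
equilibrium. Both have zero initial velocity and initial positions `1 ∓ ε → 1`, but their limits
`cos (√2 t)` and `1` differ, e.g. at `t = π / √2`.
-/

open Set Real Filter

noncomputable section

/-- The regularized stress Φ_ε'. -/
def PhiEps' (ε u : ℝ) : ℝ :=
  if |u| ≤ 1 then (2 - ε) * u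
  else if 1 ≤ u ∧ u ≤ 1 + ε then ((2 - ε) / ε) * (1 + ε - u)
  else if -1 - ε ≤ u ∧ u ≤ -1 then ((ε - 2) / ε) * (1 + ε + u)
  else 0

def d2t (u : ℝ → ℝ → ℝ) (t x : ℝ) : ℝ := deriv (fun s => deriv (fun r => u r x) s) t
def d2x (u : ℝ → ℝ → ℝ) (t x : ℝ) : ℝ := deriv (fun y => deriv (fun z => u t z) y) x

theorem PhiEps'_of_abs_le_one {ε u : ℝ} (hu : |u| ≤ 1) : PhiEps' ε u = (2 - ε) * u :=
  if_pos hu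

theorem PhiEps'_one_add_self {ε : ℝ} (hε : 0 < ε) : PhiEps' ε (1 + ε) = 0 := by
  have h_abs : ¬|1 + ε| ≤ 1 := by rw [abs_of_pos (by linarith)]; linarith
  rw [PhiEps', if_neg h_abs, if_pos ⟨by linarith, le_rfl⟩]
  ring

theorem d2x_spatially_constant (f : ℝ → ℝ) (t x : ℝ) : d2x (fun s _ => f s) t x = 0 := by
  simp [d2x]

theorem hasDerivAt_const_mul_cos_mul (c ω t : ℝ) :
    HasDerivAt (fun s => c * cos (ω * s)) (-(c * ω) * sin (ω * t)) t := by
  refine ((((hasDerivAt_id t).const_mul ω).cos).const_mul c).congr_deriv ?_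
  simp only [id, mul_one]; ring

theorem hasDerivAt_const_mul_sin_mul (c ω t : ℝ) :
    HasDerivAt (fun s => c * sin (ω * s)) (c * ω * cos (ω * t)) t := by
  refine ((((hasDerivAt_id t).const_mul ω).sin).const_mul c).congr_deriv ?_
  simp only [id, mul_one]; ring

theorem deriv_deriv_const_mul_cos_mul (c ω t : ℝ) :
    deriv (deriv fun s => c * cos (ω * s)) t = -ω ^ 2 * (c * cos (ω * t)) := by
  rw [funext fun s => (hasDerivAt_const_mul_cos_mul c ω s).deriv,
    (hasDerivAt_const_mul_sin_mul (-(c * ω)) ω t).deriv]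
  ring

theorem oscillation_solves_regularized_equation {ε : ℝ} (h0 : 0 ≤ ε) (h2 : ε ≤ 2) (t x : ℝ) :
    d2t (fun t _ => (1 - ε) * cos (√(2 - ε) * t)) t x =
      d2x (fun t _ => (1 - ε) * cos (√(2 - ε) * t)) t x -
        PhiEps' ε ((1 - ε) * cos (√(2 - ε) * t)) := by
  have h_amp : |(1 - ε) * cos (√(2 - ε) * t)| ≤ 1 := by
    rw [abs_mul]
    exact mul_le_one₀ (abs_sub_le_iff.2 ⟨by linarith, by linarith⟩) (abs_nonneg _)
      (abs_cos_le_one _)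
  rw [d2x_spatially_constant, PhiEps'_of_abs_le_one h_amp, d2t, deriv_deriv_const_mul_cos_mul,
    sq_sqrt (by linarith)]
  ring

theorem equilibrium_solves_regularized_equation {ε : ℝ} (hε : 0 < ε) (t x : ℝ) :
    d2t (fun _ _ => 1 + ε) t x = d2x (fun _ _ => 1 + ε) t x - PhiEps' ε (1 + ε) := by
  simp [d2t, d2x, PhiEps'_one_add_self hε]

theorem tendsto_oscillation (t : ℝ) :
    Tendsto (fun ε => (1 - ε) * cos (√(2 - ε) * t)) (nhdsWithin 0 (Ioi 0))
      (nhds (cos (√2 * t))) :=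
  tendsto_nhdsWithin_of_tendsto_nhds <| Continuous.tendsto' (by fun_prop) 0 _ (by simp)

theorem cos_sqrt_two_mul_ne_one :
    (fun t (_ : ℝ) => cos (√2 * t)) ≠ fun (_ _ : ℝ) => (1 : ℝ) := by
  intro h
  have h_pi := congrFun (congrFun h (π / √2)) 0
  rw [mul_div_cancel₀ π (by positivity), cos_pi] at h_pi
  norm_num at h_pi

theorem nonuniqueness_by_initial_data_regularization_general (L : ℝ) :
    ∀ ε ∈ Ioo (0:ℝ) 1,
      (let u : ℝ → ℝ → ℝ := fun t _ => (1 - ε) * Real.cos (Real.sqrt (2 - ε) * t)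
       let v : ℝ → ℝ → ℝ := fun _ _ => 1 + ε
       (∀ t x : ℝ, d2t u t x = d2x u t x - PhiEps' ε (u t x)) ∧
       (∀ t x : ℝ, d2t v t x = d2x v t x - PhiEps' ε (v t x)) ∧
       (∀ t : ℝ, deriv (fun y => u t y) 0 = 0 ∧ deriv (fun y => u t y) L = 0) ∧
       (∀ t : ℝ, deriv (fun y => v t y) 0 = 0 ∧ deriv (fun y => v t y) L = 0) ∧
       (∀ x : ℝ, u 0 x = 1 - ε ∧ deriv (fun s => u s x) 0 = 0) ∧
       (∀ x : ℝ, v 0 x = 1 + ε ∧ deriv (fun s => v s x) 0 = 0)) ∧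
    -- pointwise convergence as ε → 0⁺ to two distinct limits
    (∀ t x : ℝ, Tendsto (fun ε => (1 - ε) * Real.cos (Real.sqrt (2 - ε) * t))
        (nhdsWithin 0 (Ioi 0)) (nhds (Real.cos (Real.sqrt 2 * t)))) ∧
    (∀ t x : ℝ, Tendsto (fun ε => (1:ℝ) + ε) (nhdsWithin 0 (Ioi 0)) (nhds 1)) ∧
    (fun t (_ : ℝ) => Real.cos (Real.sqrt 2 * t)) ≠ (fun (_ _ : ℝ) => (1:ℝ)) ∧
    -- the limiting initial data coincide: u₀ ≡ 1, u₁ ≡ 0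
    (Tendsto (fun ε => (1:ℝ) - ε) (nhdsWithin 0 (Ioi 0)) (nhds 1) ∧
     Tendsto (fun ε => (1:ℝ) + ε) (nhdsWithin 0 (Ioi 0)) (nhds 1)) := by
  have h_add : Tendsto (fun ε => (1 : ℝ) + ε) (nhdsWithin 0 (Ioi 0)) (nhds 1) :=
    tendsto_nhdsWithin_of_tendsto_nhds <| Continuous.tendsto' (by fun_prop) 0 _ (by simp)
  have h_sub : Tendsto (fun ε => (1 : ℝ) - ε) (nhdsWithin 0 (Ioi 0)) (nhds 1) :=
    tendsto_nhdsWithin_of_tendsto_nhds <| Continuous.tendsto' (by fun_prop) 0 _ (by simp)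
  intro ε hε
  refine ⟨⟨oscillation_solves_regularized_equation hε.1.le (by linarith [hε.2]),
      equilibrium_solves_regularized_equation hε.1, fun _ => ⟨by simp, by simp⟩,
      fun _ => ⟨by simp, by simp⟩, fun _ => ⟨by simp, ?_⟩, fun _ => ⟨rfl, by simp⟩⟩,
    fun t _ => tendsto_oscillation t, fun _ _ => h_add, cos_sqrt_two_mul_ne_one, h_sub, h_add⟩
  simpa using (hasDerivAt_const_mul_cos_mul (1 - ε) √(2 - ε) 0).deriv

/-- Example 3.4. Both u_ε(t,x) = (1−ε)cos(√(2−ε) t) and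
v_ε(t,x) = 1+ε solve the ε-regularized problem with Neumann conditions and
initial data (1−ε,0), (1+ε,0); as ε→0⁺ they converge to two distinct limit
solutions cos(√2 t) and 1 with the same limiting initial data u₀ ≡ 1, u₁ ≡ 0. -/
theorem nonuniqueness_by_initial_data_regularization (L : ℝ) (hL : 0 < L) :
    ∀ ε ∈ Ioo (0:ℝ) 1,
      (let u : ℝ → ℝ → ℝ := fun t _ => (1 - ε) * Real.cos (Real.sqrt (2 - ε) * t)
       let v : ℝ → ℝ → ℝ := fun _ _ => 1 + ε
       (∀ t x : ℝ, d2t u t x = d2x u t x - PhiEps' ε (u t x)) ∧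
       (∀ t x : ℝ, d2t v t x = d2x v t x - PhiEps' ε (v t x)) ∧
       (∀ t : ℝ, deriv (fun y => u t y) 0 = 0 ∧ deriv (fun y => u t y) L = 0) ∧
       (∀ t : ℝ, deriv (fun y => v t y) 0 = 0 ∧ deriv (fun y => v t y) L = 0) ∧
       (∀ x : ℝ, u 0 x = 1 - ε ∧ deriv (fun s => u s x) 0 = 0) ∧
       (∀ x : ℝ, v 0 x = 1 + ε ∧ deriv (fun s => v s x) 0 = 0)) ∧
    -- pointwise convergence as ε → 0⁺ to two distinct limits
    (∀ t x : ℝ, Tendsto (fun ε => (1 - ε) * Real.cos (Real.sqrt (2 - ε) * t))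
        (nhdsWithin 0 (Ioi 0)) (nhds (Real.cos (Real.sqrt 2 * t)))) ∧
    (∀ t x : ℝ, Tendsto (fun ε => (1:ℝ) + ε) (nhdsWithin 0 (Ioi 0)) (nhds 1)) ∧
    (fun t (_ : ℝ) => Real.cos (Real.sqrt 2 * t)) ≠ (fun (_ _ : ℝ) => (1:ℝ)) ∧
    -- the limiting initial data coincide: u₀ ≡ 1, u₁ ≡ 0
    (Tendsto (fun ε => (1:ℝ) - ε) (nhdsWithin 0 (Ioi 0)) (nhds 1) ∧
     Tendsto (fun ε => (1:ℝ) + ε) (nhdsWithin 0 (Ioi 0)) (nhds 1)) :=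
  nonuniqueness_by_initial_data_regularization_general L

end
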